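/- Theorem 2.1, part 3 (finiteness of the path sampling integral). Let π be a probability measure on Θ such that (i) the function θ ↦ Q(θ,Y) is π-integrable, and (ii) there exists M < ∞ with f(Y|θ,t) ≤ M for all t ∈ [0,1] and π-almost every θ. Then z_t > 0 for all t ∈ [0,1], the expected score t ↦ E_t(U) = (∫_Θ U(θ,Y,t) f(Y|θ,t) dπ(θ)) / z_t is continuous on [0,1], and consequently the path sampling integral ∫₀¹ E_t(U) dt exists and is finite. -/

import Mathlib

open MeasureTheory Real Filter Set

/-- The parameter space Θ of a factor model with `p` outcomes, `k+1` factors and `n`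
observations: loadings Λ ∈ ℝ^{p×(k+1)}, variances σ² ∈ (0,∞)^p and latent factors
η = (η₁,…,η_n), ηᵢ ∈ ℝ^{k+1}. -/
abbrev FactorParam (p k n : ℕ) : Type :=
  Matrix (Fin p) (Fin (k + 1)) ℝ × {σ : Fin p → ℝ // ∀ j, 0 < σ j} ×
    (Fin n → Fin (k + 1) → ℝ)

/-- Λ_t : the matrix obtained from Λ by multiplying its last column by `t` (PAMP). -/
def pathLam {p k : ℕ} (t : ℝ) (Λ : Matrix (Fin p) (Fin (k + 1)) ℝ) :
    Matrix (Fin p) (Fin (k + 1)) ℝ :=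
  fun j l => if l = Fin.last k then t * Λ j l else Λ j l

/-- The factor model likelihood f(Y|θ) = ∏ᵢ∏ⱼ (2πσⱼ²)^{-1/2} exp(−(y_{ij} − (Ληᵢ)_j)²/(2σⱼ²)). -/
noncomputable def lik {p k n : ℕ} (Y : Fin n → Fin p → ℝ) (θ : FactorParam p k n) : ℝ :=
  ∏ i : Fin n, ∏ j : Fin p,
    (2 * π * θ.2.1.1 j) ^ (-(1 : ℝ) / 2) *
      Real.exp (-(Y i j - ∑ l, θ.1 j l * θ.2.2 i l) ^ 2 / (2 * θ.2.1.1 j))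

/-- The likelihood along the parametric arithmetic mean path: f(Y|θ,t) = f(Y|(Λ_t,σ²,η)). -/
noncomputable def pathLik {p k n : ℕ} (Y : Fin n → Fin p → ℝ) (θ : FactorParam p k n)
    (t : ℝ) : ℝ :=
  lik Y (pathLam t θ.1, θ.2)

/-- The score function U(θ,Y,t) = ∑ᵢ∑ⱼ (y_{ij} − (Λ_t ηᵢ)_j) σⱼ^{−2} Λ_{jk} η_{ik}. -/
noncomputable def scoreU {p k n : ℕ} (Y : Fin n → Fin p → ℝ) (θ : FactorParam p k n)
    (t : ℝ) : ℝ :=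
  ∑ i : Fin n, ∑ j : Fin p,
    (Y i j - ∑ l, pathLam t θ.1 j l * θ.2.2 i l) * (θ.2.1.1 j)⁻¹ *
      (θ.1 j (Fin.last k) * θ.2.2 i (Fin.last k))

/-- The dominating function Q(θ,Y), free of t. -/
noncomputable def Qbound {p k n : ℕ} (Y : Fin n → Fin p → ℝ) (θ : FactorParam p k n) : ℝ :=
  ∑ i : Fin n, ∑ j : Fin p,
    (|Y i j| + ∑ l, |θ.1 j l| * |θ.2.2 i l|) * (θ.2.1.1 j)⁻¹ *
      (|θ.1 j (Fin.last k)| * |θ.2.2 i (Fin.last k)|)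

/-- The Borel-type product σ-algebra on the space of loading matrices. -/
instance {p k : ℕ} : MeasurableSpace (Matrix (Fin p) (Fin (k + 1)) ℝ) :=
  MeasurableSpace.pi

/-!
The Gaussian likelihood is positive, so `z_t > 0`. On `[0, 1]` the path only shrinks the last
column of `Λ`, hence `|(Λ_t ηᵢ)_j| ≤ ∑ₗ |Λ_{jl}| |η_{il}|` and `|U(θ,Y,t)| ≤ Q(θ,Y)`. Thus the
integrands `U f` and `f` of numerator and denominator, both continuous in `t`, are dominated
by `M Q` and `M`, and dominated convergence makes `E_t(U)` continuous on `[0, 1]`.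
-/

section IntegralRatio

variable {α : Type*} [MeasurableSpace α] {μ : Measure α}

theorem integral_pos_of_ae_pos [NeZero μ] {f : α → ℝ} (hf : ∀ᵐ x ∂μ, 0 < f x)
    (hint : Integrable f μ) : 0 < ∫ x, f x ∂μ := by
  rw [integral_pos_iff_support_of_nonneg_ae (hf.mono fun _ h => h.le) hint]
  refine pos_iff_ne_zero.2 fun h0 => NeZero.ne μ ?_
  rw [← ae_eq_bot, ← eventually_false_iff_eq_bot]
  filter_upwards [measure_eq_zero_iff_ae_notMem.1 h0, hf] with x hx hfx
  exact hx hfx.ne'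

theorem continuousOn_integral_mul_div_integral [IsFiniteMeasure μ] {U L : α → ℝ → ℝ}
    {Q : α → ℝ} {M : ℝ} {s : Set ℝ}
    (hU_meas : ∀ t ∈ s, AEStronglyMeasurable (U · t) μ)
    (hL_meas : ∀ t ∈ s, AEStronglyMeasurable (L · t) μ)
    (hU_cont : ∀ᵐ x ∂μ, ContinuousOn (U x) s) (hL_cont : ∀ᵐ x ∂μ, ContinuousOn (L x) s)
    (hUQ : ∀ᵐ x ∂μ, ∀ t ∈ s, |U x t| ≤ Q x) (hQ : Integrable Q μ)
    (hLM : ∀ᵐ x ∂μ, ∀ t ∈ s, |L x t| ≤ M) (hz : ∀ t ∈ s, ∫ x, L x t ∂μ ≠ 0) :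
    ContinuousOn (fun t => (∫ x, U x t * L x t ∂μ) / ∫ x, L x t ∂μ) s := by
  have hnum : ContinuousOn (fun t => ∫ x, U x t * L x t ∂μ) s := by
    refine continuousOn_of_dominated (bound := fun x => Q x * M)
      (fun t ht => (hU_meas t ht).mul (hL_meas t ht)) (fun t ht => ?_) (hQ.mul_const M) ?_
    · filter_upwards [hUQ, hLM] with x hUx hLx
      rw [Real.norm_eq_abs, abs_mul]
      exact mul_le_mul (hUx t ht) (hLx t ht) (abs_nonneg _) ((abs_nonneg _).trans (hUx t ht))
    · filter_upwards [hU_cont, hL_cont] with x hUx hLx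
      exact hUx.mul hLx
  have hden : ContinuousOn (fun t => ∫ x, L x t ∂μ) s :=
    continuousOn_of_dominated hL_meas (fun t ht => hLM.mono fun x hx => hx t ht)
      (integrable_const M) hL_cont
  exact hnum.div hden hz

end IntegralRatio

section FactorModel

variable {p k n : ℕ}

@[fun_prop]
theorem continuous_pathLam (Λ : Matrix (Fin p) (Fin (k + 1)) ℝ) :
    Continuous fun t : ℝ => pathLam t Λ := by
  unfold pathLam
  refine continuous_pi fun j => continuous_pi fun l => ?_
  split_ifs <;> fun_prop

@[fun_prop]
theorem measurable_pathLam (t : ℝ) : Measurable (pathLam (p := p) (k := k) t) := by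
  unfold pathLam
  refine measurable_pi_lambda _ fun j => measurable_pi_lambda _ fun l => ?_
  split_ifs <;> fun_prop

@[fun_prop]
theorem measurable_variance_apply (j : Fin p) :
    Measurable fun θ : FactorParam p k n => (θ.2.1 : Fin p → ℝ) j :=
  (measurable_pi_apply j).comp (by fun_prop)

theorem abs_pathLam_le {t : ℝ} (ht : |t| ≤ 1) (Λ : Matrix (Fin p) (Fin (k + 1)) ℝ)
    (j : Fin p) (l : Fin (k + 1)) : |pathLam t Λ j l| ≤ |Λ j l| := by
  unfold pathLam
  split_ifs
  · rw [abs_mul]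
    exact mul_le_of_le_one_left (abs_nonneg _) ht
  · exact le_rfl

variable (Y : Fin n → Fin p → ℝ)

theorem pathLik_pos (θ : FactorParam p k n) (t : ℝ) : 0 < pathLik Y θ t := by
  unfold pathLik lik
  refine Finset.prod_pos fun i _ => Finset.prod_pos fun j _ => ?_
  have hσ : 0 < 2 * π * θ.2.1.1 j := by
    have := θ.2.1.2 j
    positivity
  exact mul_pos (Real.rpow_pos_of_pos hσ _) (Real.exp_pos _)

theorem measurable_pathLik (t : ℝ) : Measurable fun θ : FactorParam p k n => pathLik Y θ t := by
  unfold pathLik lik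
  fun_prop

theorem measurable_scoreU (t : ℝ) : Measurable fun θ : FactorParam p k n => scoreU Y θ t := by
  unfold scoreU
  fun_prop

theorem continuous_pathLik (θ : FactorParam p k n) : Continuous (pathLik Y θ) := by
  unfold pathLik lik
  dsimp only
  fun_prop

theorem continuous_scoreU (θ : FactorParam p k n) : Continuous (scoreU Y θ) := by
  unfold scoreU
  fun_prop

theorem abs_scoreU_le_Qbound (θ : FactorParam p k n) {t : ℝ} (ht : |t| ≤ 1) :
    |scoreU Y θ t| ≤ Qbound Y θ := by
  unfold scoreU Qbound
  refine (Finset.abs_sum_le_sum_abs _ _).trans (Finset.sum_le_sum fun i _ => ?_)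
  refine (Finset.abs_sum_le_sum_abs _ _).trans (Finset.sum_le_sum fun j _ => ?_)
  have hfit : |Y i j - ∑ l, pathLam t θ.1 j l * θ.2.2 i l|
      ≤ |Y i j| + ∑ l, |θ.1 j l| * |θ.2.2 i l| := by
    refine (abs_sub _ _).trans (add_le_add le_rfl ?_)
    refine (Finset.abs_sum_le_sum_abs _ _).trans (Finset.sum_le_sum fun l _ => ?_)
    rw [abs_mul]
    exact mul_le_mul_of_nonneg_right (abs_pathLam_le ht θ.1 j l) (abs_nonneg _)
  have hσ : 0 < (θ.2.1.1 j)⁻¹ := inv_pos.2 (θ.2.1.2 j)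
  rw [abs_mul, abs_mul, abs_mul, abs_of_pos hσ]
  gcongr

end FactorModel

theorem path_sampling_integral_finite {p k n : ℕ} (Y : Fin n → Fin p → ℝ)
    (P : MeasureTheory.Measure (FactorParam p k n)) [MeasureTheory.IsProbabilityMeasure P]
    (hQ : MeasureTheory.Integrable (fun θ => Qbound Y θ) P)
    (M : ℝ) (hM : ∀ᵐ θ ∂P, ∀ t ∈ Set.Icc (0 : ℝ) 1, pathLik Y θ t ≤ M) :
    (∀ t ∈ Set.Icc (0 : ℝ) 1, 0 < ∫ θ, pathLik Y θ t ∂P) ∧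
      ContinuousOn
        (fun t : ℝ => (∫ θ, scoreU Y θ t * pathLik Y θ t ∂P) / ∫ θ, pathLik Y θ t ∂P)
        (Set.Icc (0 : ℝ) 1) ∧
      IntervalIntegrable
        (fun t : ℝ => (∫ θ, scoreU Y θ t * pathLik Y θ t ∂P) / ∫ θ, pathLik Y θ t ∂P)
        MeasureTheory.volume 0 1 := by
  have hunit : ∀ t ∈ Set.Icc (0 : ℝ) 1, |t| ≤ 1 := fun t ht =>
    abs_le.2 ⟨by linarith [ht.1], ht.2⟩
  have hLM : ∀ᵐ θ ∂P, ∀ t ∈ Set.Icc (0 : ℝ) 1, |pathLik Y θ t| ≤ M :=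
    hM.mono fun θ hθ t ht => (abs_of_pos (pathLik_pos Y θ t)).trans_le (hθ t ht)
  have hz : ∀ t ∈ Set.Icc (0 : ℝ) 1, 0 < ∫ θ, pathLik Y θ t ∂P := fun t ht =>
    integral_pos_of_ae_pos (ae_of_all _ fun θ => pathLik_pos Y θ t)
      ((integrable_const M).mono' (measurable_pathLik Y t).aestronglyMeasurable
        (hLM.mono fun θ hθ => hθ t ht))
  have hcont := continuousOn_integral_mul_div_integral
    (fun t _ => (measurable_scoreU Y t).aestronglyMeasurable)
    (fun t _ => (measurable_pathLik Y t).aestronglyMeasurable)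
    (ae_of_all _ fun θ => (continuous_scoreU Y θ).continuousOn)
    (ae_of_all _ fun θ => (continuous_pathLik Y θ).continuousOn)
    (ae_of_all _ fun θ t ht => abs_scoreU_le_Qbound Y θ (hunit t ht)) hQ hLM
    (fun t ht => (hz t ht).ne')
  exact ⟨hz, hcont, hcont.intervalIntegrable_of_Icc zero_le_one⟩
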